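/- Let λ be a partition and let b be a semistandard Young tableau of shape λ with entries in the positive integers such that the set S_b = {μ partition : b is μ-distinguished} is nonempty. Then S_b has a unique minimal element μ_b for the order ≤_⊞, and S_b = μ_b + 𝒫^{⊞}, i.e. S_b = {μ_b + κ : κ ∈ 𝒫^{⊞}}. Moreover, for any μ ∈ S_b one has μ_b = μ^{⊞}. -/

import Mathlib

open scoped Classical

noncomputable section

namespace GE

/-- The coefficient of the `i`-th fundamental weight (`i ≥ 1`) in the dominant weight
corresponding to the partition `μ`: the number of columns of the Young diagram of `μ`
of height exactly `i`. -/
def coord (μ : YoungDiagram) (i : ℕ) : ℕ := μ.rowLen (i - 1) - μ.rowLen i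

/-- The Japanese reading word of a semistandard Young tableau: columns are read from right
to left, each column from top to bottom. -/
def jword {μ : YoungDiagram} (T : SemistandardYoungTableau μ) : List ℕ :=
  (((List.range (μ.rowLen 0)).reverse).map fun j =>
    (List.range (μ.colLen j)).map fun i => T i j).flatten

/-- The crystal statistic `ε_i` of a word, via the bracketing rule. -/
def wordEps (i : ℕ) (w : List ℕ) : ℕ :=
  (Finset.range (w.length + 1)).sup fun k => (w.take k).count (i + 1) - (w.take k).count i

/-- The crystal statistic `φ_i` of a word, via the bracketing rule. -/
def wordPhi (i : ℕ) (w : List ℕ) : ℕ :=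
  (Finset.range (w.length + 1)).sup fun k => (w.drop k).count i - (w.drop k).count (i + 1)

/-- The crystal statistic `ε_i` of a semistandard tableau. -/
def eps (i : ℕ) {μ : YoungDiagram} (T : SemistandardYoungTableau μ) : ℕ := wordEps i (jword T)

/-- The crystal statistic `φ_i` of a semistandard tableau. -/
def phi (i : ℕ) {μ : YoungDiagram} (T : SemistandardYoungTableau μ) : ℕ := wordPhi i (jword T)

/-- The number of entries of `T` equal to `k`. -/
def cnt {μ : YoungDiagram} (T : SemistandardYoungTableau μ) (k : ℕ) : ℕ := (jword T).count k

/-- All entries of `T` lie in the alphabet `{1, …, m}`. -/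
def EntriesIn {μ : YoungDiagram} (T : SemistandardYoungTableau μ) (m : ℕ) : Prop :=
  ∀ i j, (i, j) ∈ μ → 1 ≤ T i j ∧ T i j ≤ m

/-- All entries of `T` are positive integers. -/
def PosEntries {μ : YoungDiagram} (T : SemistandardYoungTableau μ) : Prop :=
  ∀ i j, (i, j) ∈ μ → 1 ≤ T i j

/-- The partition `ν` has all parts even (`ν ∈ 𝒫^{(2)}`). -/
def EvenParts (ν : YoungDiagram) : Prop := ∀ i, Even (ν.rowLen i)

/-- Every part of `δ` occurs with even multiplicity, i.e. `δ_{2i-1} = δ_{2i}` for all `i ≥ 1`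
(`δ ∈ 𝒫^{(1,1)}`). -/
def EvenMult (δ : YoungDiagram) : Prop := ∀ i, δ.rowLen (2 * i) = δ.rowLen (2 * i + 1)

/-- `b` is `μ`-distinguished: there are `ν ∈ 𝒫^{(2)}` and `δ ∈ 𝒫^{(1,1)}` with
`φ(b) = ν - μ` and `ε(b) = δ - μ`, as equalities of weights written in the basis of the
fundamental weights `ω_i` (a partition `κ` having `ω_i`-coefficient `coord κ i`). -/
def Distinguished {lam : YoungDiagram} (b : SemistandardYoungTableau lam)
    (μ : YoungDiagram) : Prop :=
  ∃ ν δ : YoungDiagram, EvenParts ν ∧ EvenMult δ ∧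
    (∀ i, 1 ≤ i → coord ν i = phi i b + coord μ i) ∧
    (∀ i, 1 ≤ i → coord δ i = eps i b + coord μ i)

/-- The coefficient of `ω_i` in `μ_b = Σ_i (φ_{2i}(b) mod 2) ω_{2i}`. -/
def muBcoord {lam : YoungDiagram} (b : SemistandardYoungTableau lam) (i : ℕ) : ℕ :=
  if Even i ∧ 1 ≤ i then phi i b % 2 else 0

/-- The size `|φ(b) + μ_b|` of the weight `φ(b) + μ_b` (a column of height `i`, i.e. the
fundamental weight `ω_i`, contributing `i` boxes). -/
def statB {lam : YoungDiagram} (b : SemistandardYoungTableau lam) : ℕ :=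
  ∑ᶠ i : ℕ, i * (phi i b + muBcoord b i)

/-- `κ ≤_⊞ μ`, i.e. `μ - κ ∈ 𝒫^{⊞} = 𝒫^{(2)} ∩ 𝒫^{(1,1)}`; in terms of the coefficients of
the fundamental weights: the difference `μ - κ` is nonnegative, vanishes in each odd
coordinate, and is even in each coordinate. -/
def leB (κ μ : YoungDiagram) : Prop :=
  ∀ i, 1 ≤ i → coord κ i ≤ coord μ i ∧ (Odd i → coord κ i = coord μ i) ∧
    Even (coord μ i - coord κ i)

/-! In the basis of fundamental weights, a partition lies in `𝒫^{(2)}` iff all its coordinates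
are even, and in `𝒫^{(1,1)}` iff its odd coordinates vanish; conversely every finitely supported
coordinate vector comes from a partition. Hence `b` is `μ`-distinguished iff `φ_i(b) + μ_i` is
even for all `i` and `ε_i(b) = μ_i = 0` for odd `i`. Once one such `μ` exists, these conditions
only force the odd coordinates of `μ` to vanish and fix the parity of the even ones to that of
`φ_i(b)`, so `S_b` is the coset `μ_b + 𝒫^{⊞}` with `μ_b = Σ_i (φ_{2i}(b) mod 2) ω_{2i}`. -/

open Finset

lemma rowLen_eq_zero_of_colLen_le (μ : YoungDiagram) {i : ℕ} (h : μ.colLen 0 ≤ i) :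
    μ.rowLen i = 0 := by
  by_contra hne
  have := YoungDiagram.mem_iff_lt_colLen.1
    (YoungDiagram.mem_iff_lt_rowLen.2 (Nat.pos_of_ne_zero hne))
  omega

lemma coord_eq_zero_of_colLen_lt (μ : YoungDiagram) {i : ℕ} (h : μ.colLen 0 < i) :
    coord μ i = 0 := by
  rw [coord, rowLen_eq_zero_of_colLen_le μ (by omega), rowLen_eq_zero_of_colLen_le μ h.le]

lemma rowLen_eq_add_sum_coord (μ : YoungDiagram) {k n : ℕ} (h : k ≤ n) :
    μ.rowLen k = μ.rowLen n + ∑ i ∈ Ioc k n, coord μ i := by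
  induction n, h using Nat.le_induction with
  | base => simp
  | succ n hkn ih =>
    have := μ.rowLen_anti n (n + 1) n.le_succ
    rw [sum_Ioc_succ_top hkn, ih, coord, Nat.add_sub_cancel]
    omega

lemma rowLen_eq_sum_coord (μ : YoungDiagram) (k : ℕ) {n : ℕ} (hn : μ.colLen 0 ≤ n) :
    μ.rowLen k = ∑ i ∈ Ioc k n, coord μ i := by
  rcases le_total k n with h | h
  · rw [rowLen_eq_add_sum_coord μ h, rowLen_eq_zero_of_colLen_le μ hn, zero_add]
  · rw [rowLen_eq_zero_of_colLen_le μ (hn.trans h), Ioc_eq_empty (by omega), sum_empty]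

lemma eq_of_coord_eq {μ ν : YoungDiagram} (h : ∀ i, 1 ≤ i → coord μ i = coord ν i) : μ = ν := by
  have hrow (k : ℕ) : μ.rowLen k = ν.rowLen k := by
    rw [rowLen_eq_sum_coord μ k (le_max_left (μ.colLen 0) (ν.colLen 0)),
      rowLen_eq_sum_coord ν k (le_max_right _ _)]
    exact sum_congr rfl fun i hi => h i (by rw [mem_Ioc] at hi; omega)
  ext ⟨i, j⟩
  simp only [YoungDiagram.mem_cells, YoungDiagram.mem_iff_lt_rowLen, hrow]

lemma exists_coord_eq (c : ℕ → ℕ) {n : ℕ} (hc : ∀ i, n < i → c i = 0) :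
    ∃ κ : YoungDiagram, ∀ i, 1 ≤ i → coord κ i = c i := by
  set r : ℕ → ℕ := fun k => ∑ i ∈ Ioc k n, c i with hr_def
  have hr : Antitone r := fun k l hkl => sum_le_sum_of_subset (Ioc_subset_Ioc_left hkl)
  have hr_zero {k : ℕ} (hk : n ≤ k) : r k = 0 := by simp [hr_def, Ioc_eq_empty_of_le hk]
  let κ := YoungDiagram.ofRowLens (List.ofFn fun k : Fin n => r k)
    (List.sortedGE_ofFn_iff.2 (hr.comp_monotone Fin.val_strictMono.monotone))
  have hκ (k : ℕ) : κ.rowLen k = r k := eq_of_forall_lt_iff fun j => by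
    rw [← YoungDiagram.mem_iff_lt_rowLen, YoungDiagram.mem_ofRowLens]
    by_cases hk : k < n
    · simp [hk]
    · simp [hk, hr_zero (not_lt.1 hk)]
  refine ⟨κ, fun i hi => ?_⟩
  obtain ⟨k, rfl⟩ : ∃ k, i = k + 1 := ⟨i - 1, by omega⟩
  rw [coord, hκ, hκ, Nat.add_sub_cancel]
  rcases lt_or_ge k n with hk | hk
  · simp only [hr_def]
    rw [← sum_Ioc_consecutive c (Nat.le_add_right k 1) hk, Nat.Ioc_succ_singleton, sum_singleton]
    omega
  · rw [hr_zero hk, hr_zero (by omega), hc _ (by omega)]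

lemma evenParts_iff (ν : YoungDiagram) : EvenParts ν ↔ ∀ i, 1 ≤ i → Even (coord ν i) := by
  refine ⟨fun h i _ => (h (i - 1)).tsub (h i), fun h k => ?_⟩
  rw [rowLen_eq_sum_coord ν k le_rfl]
  exact even_sum _ fun i hi => h i (by rw [mem_Ioc] at hi; omega)

lemma evenMult_iff (δ : YoungDiagram) : EvenMult δ ↔ ∀ i, Odd i → coord δ i = 0 := by
  refine ⟨?_, fun h k => ?_⟩
  · rintro h i ⟨k, rfl⟩
    simp [coord, h k]
  · have h1 := h (2 * k + 1) (odd_two_mul_add_one k)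
    have h2 := δ.rowLen_anti (2 * k) (2 * k + 1) (by omega)
    rw [coord, Nat.add_sub_cancel] at h1
    omega

lemma wordPhi_eq_zero_of_not_mem {i : ℕ} {w : List ℕ} (h : i ∉ w) : wordPhi i w = 0 :=
  Nat.eq_zero_of_le_zero <| Finset.sup_le fun k _ => by
    rw [List.count_eq_zero_of_not_mem fun hm => h (List.mem_of_mem_drop hm), Nat.zero_sub]

lemma wordEps_eq_zero_of_not_mem {i : ℕ} {w : List ℕ} (h : i + 1 ∉ w) : wordEps i w = 0 :=
  Nat.eq_zero_of_le_zero <| Finset.sup_le fun k _ => by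
    rw [List.count_eq_zero_of_not_mem fun hm => h (List.mem_of_mem_take hm), Nat.zero_sub]

section Tableau

variable {lam : YoungDiagram} (b : SemistandardYoungTableau lam)

lemma phi_eq_zero_of_sum_lt {i : ℕ} (h : (jword b).sum < i) : phi i b = 0 :=
  wordPhi_eq_zero_of_not_mem fun hm => (List.le_sum_of_mem hm).not_gt h

lemma eps_eq_zero_of_sum_le {i : ℕ} (h : (jword b).sum ≤ i) : eps i b = 0 :=
  wordEps_eq_zero_of_not_mem fun hm => (List.le_sum_of_mem hm).not_gt (by omega)

theorem distinguished_iff (μ : YoungDiagram) :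
    Distinguished b μ ↔
      ∀ i, 1 ≤ i → Even (phi i b + coord μ i) ∧ (Odd i → eps i b + coord μ i = 0) := by
  constructor
  · rintro ⟨ν, δ, hν, hδ, hφ, hε⟩ i hi
    exact ⟨hφ i hi ▸ (evenParts_iff ν).1 hν i hi, fun ho => hε i hi ▸ (evenMult_iff δ).1 hδ i ho⟩
  · intro h
    have hvanish {i : ℕ} (hi : max (jword b).sum (μ.colLen 0) < i) :
        phi i b + coord μ i = 0 ∧ eps i b + coord μ i = 0 := by
      rw [max_lt_iff] at hi
      rw [phi_eq_zero_of_sum_lt b hi.1, eps_eq_zero_of_sum_le b hi.1.le,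
        coord_eq_zero_of_colLen_lt μ hi.2]
      exact ⟨rfl, rfl⟩
    obtain ⟨ν, hν⟩ := exists_coord_eq (fun i => phi i b + coord μ i) fun i hi => (hvanish hi).1
    obtain ⟨δ, hδ⟩ := exists_coord_eq (fun i => eps i b + coord μ i) fun i hi => (hvanish hi).2
    refine ⟨ν, δ, (evenParts_iff ν).2 fun i hi => ?_, (evenMult_iff δ).2 fun i ho => ?_, hν, hδ⟩
    · exact hν i hi ▸ (h i hi).1
    · exact hδ i ho.pos ▸ (h i ho.pos).2 ho

lemma exists_coord_eq_muBcoord : ∃ μb : YoungDiagram, ∀ i, 1 ≤ i → coord μb i = muBcoord b i :=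
  exists_coord_eq (muBcoord b) (n := (jword b).sum) fun i hi => by simp [muBcoord, phi_eq_zero_of_sum_lt b hi]

variable {b}

lemma muBcoord_eq_of_distinguished {μ : YoungDiagram} (hμ : Distinguished b μ) {i : ℕ}
    (hi : 1 ≤ i) : muBcoord b i = if Odd i then coord μ i else coord μ i % 2 := by
  have := (distinguished_iff b μ).1 hμ i hi
  simp only [muBcoord, ← Nat.not_even_iff_odd, Nat.even_iff] at this ⊢
  split_ifs <;> omega

lemma distinguished_iff_leB {μb μ₀ : YoungDiagram}
    (hμb : ∀ i, 1 ≤ i → coord μb i = muBcoord b i) (hμ₀ : Distinguished b μ₀)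
    (μ : YoungDiagram) : Distinguished b μ ↔ leB μb μ := by
  rw [distinguished_iff]
  refine forall₂_congr fun i hi => ?_
  have := (distinguished_iff b μ₀).1 hμ₀ i hi
  rw [hμb i hi, muBcoord]
  simp only [← Nat.not_even_iff_odd, Nat.even_iff] at this ⊢
  split_ifs <;> omega

end Tableau

lemma leB_refl (μ : YoungDiagram) : leB μ μ :=
  fun _ _ => ⟨le_rfl, fun _ => rfl, by simp⟩

lemma leB_antisymm {κ μ : YoungDiagram} (h₁ : leB κ μ) (h₂ : leB μ κ) : κ = μ :=
  eq_of_coord_eq fun i hi => le_antisymm (h₁ i hi).1 (h₂ i hi).1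

theorem distinguished_minimal_mu_general (lam : YoungDiagram) (b : SemistandardYoungTableau lam)
    (hne : ∃ μ : YoungDiagram, Distinguished b μ) :
    ∃! μb : YoungDiagram,
      Distinguished b μb ∧
      (∀ μ : YoungDiagram, Distinguished b μ ↔ leB μb μ) ∧
      (∀ μ : YoungDiagram, Distinguished b μ →
        ∀ i, 1 ≤ i → coord μb i = if Odd i then coord μ i else coord μ i % 2) := by
  obtain ⟨μ₀, hμ₀⟩ := hne
  obtain ⟨μb, hμb⟩ := exists_coord_eq_muBcoord b
  have hiff := distinguished_iff_leB hμb hμ₀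
  have hdist : Distinguished b μb := (hiff μb).2 (leB_refl μb)
  refine ⟨μb, ⟨hdist, hiff, fun μ hμ i hi => ?_⟩, ?_⟩
  · rw [hμb i hi, muBcoord_eq_of_distinguished hμ hi]
  · rintro μ ⟨hμ, hiff', -⟩
    exact leB_antisymm ((hiff' μb).1 hdist) ((hiff μ).1 hμ)

/-- If the set `S_b = {μ : b is μ-distinguished}` is nonempty, then it has a
unique minimal element `μ_b` for the order `≤_⊞`, `S_b = μ_b + 𝒫^{⊞}`, and for any
`μ ∈ S_b` one has `μ_b = μ^{⊞}` (where `μ^{⊞}` keeps the odd coordinates of `μ` and reduces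
the even ones mod `2`, in the basis of the fundamental weights). -/
theorem distinguished_minimal_mu (lam : YoungDiagram) (b : SemistandardYoungTableau lam)
    (hpos : PosEntries b) (hne : ∃ μ : YoungDiagram, Distinguished b μ) :
    ∃! μb : YoungDiagram,
      Distinguished b μb ∧
      (∀ μ : YoungDiagram, Distinguished b μ ↔ leB μb μ) ∧
      (∀ μ : YoungDiagram, Distinguished b μ →
        ∀ i, 1 ≤ i → coord μb i = if Odd i then coord μ i else coord μ i % 2) :=
  distinguished_minimal_mu_general lam b hne

end GE
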